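/- arXiv:math/0401168 — 3 statements merged into one kernel-verified Lean document; each statement's English description precedes it below -/
import Mathlib

section
/- Let R be the mod p Dyer–Lashof algebra for an odd prime p. Then the left ideal I of R generated by the set {βQ^s : s ≥ 1} is also a right ideal, i.e. a two-sided ideal. Consequently, any admissible monomial Q^I containing at least one Bockstein β lies in the left ideal generated by the βQ^s. -/
/-!
A left ideal generated by `S` is two-sided as soon as `x * g` lies in it for `x ∈ S` and `g` among
algebra generators, so it suffices that `βQ^s · Q^t` lies in the left ideal `J` generated by the
`βQ^u` (products `βQ^s · βQ^t` are in `J` trivially). This is proved by strong induction on `s`.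
If `s + t < pt` the product is unstable, hence zero. If `pt < s`, the Adem relation writes it as a
combination of `βQ^{s+t-i} Q^i` with `i > t`, covered by induction. If `pt ≤ s + t` and `s ≤ pt`,
put `u = s + t - pt ≤ t`: the Adem relation for `Q^{pt} βQ^u` expresses the left ideal element
`Q^{pt} βQ^u` as `βQ^s Q^t` (coefficient `(-1)^{(p+1)t} = 1`, using that `p` is odd), plus terms
`βQ^{s+t-i} Q^i` with `i > t`, plus terms ending in some `βQ^i`.
-/

noncomputable section

variable (p : ℕ)

/-- Generators `β^εQ^s` of the Dyer–Lashof algebra: `(ε, s)` with `ε : Bool`. -/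
abbrev DLGen : Type := Bool × ℕ

/-- The free associative `F_p`-algebra on the symbols `β^εQ^s`. -/
abbrev FreeO (p : ℕ) : Type := FreeAlgebra (ZMod p) DLGen

/-- The generator `β^εQ^s`. -/
def gen (p : ℕ) (ε : Bool) (s : ℕ) : FreeO p := FreeAlgebra.ι (ZMod p) (ε, s)

/-- `deg β^εQ^s = 2s(p-1) - ε`. -/
def gdeg (p : ℕ) (g : DLGen) : ℤ := 2 * g.2 * ((p : ℤ) - 1) - (if g.1 then 1 else 0)

/-- The homogeneous component of degree `n` of the free algebra. -/
def HcompO (p : ℕ) (n : ℤ) : Submodule (ZMod p) (FreeO p) :=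
  Submodule.span (ZMod p)
    {w | ∃ L : List DLGen, (L.map (gdeg p)).sum = n ∧
      w = (L.map fun g => gen p g.1 g.2).prod}

/-- The binomial coefficient `(i, j) = (i+j)!/(i!·j!)` mod `p`, zero if `i < 0` or `j < 0`. -/
def bin (p : ℕ) (a b : ℤ) : ZMod p :=
  if 0 ≤ a ∧ 0 ≤ b then ((a + b).toNat.choose a.toNat : ZMod p) else 0

/-- The Adem elements `𝒜^{(ε,r,0,s)}`, `r > ps`. -/
def ademSetO1 (p : ℕ) : Set (FreeO p) :=
  {x | ∃ (ε : Bool) (r s : ℕ), p * s < r ∧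
    x = gen p ε r * gen p false s -
      ∑ i ∈ Finset.range (r + s + 1),
        (((-1 : ZMod p) ^ (r + i)) *
          bin p ((p : ℤ) * i - r) ((r : ℤ) - ((p : ℤ) - 1) * s - i - 1)) •
          (gen p ε (r + s - i) * gen p false i)}

/-- The Adem elements `𝒜^{(0,r,1,s)}`, `r ≥ ps`. -/
def ademSetO2 (p : ℕ) : Set (FreeO p) :=
  {x | ∃ (r s : ℕ), p * s ≤ r ∧
    x = gen p false r * gen p true s -
      (∑ i ∈ Finset.range (r + s + 1),
        (((-1 : ZMod p) ^ (r + i)) *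
          bin p ((p : ℤ) * i - r) ((r : ℤ) - ((p : ℤ) - 1) * s - i)) •
          (gen p true (r + s - i) * gen p false i) -
       ∑ i ∈ Finset.range (r + s + 1),
        (((-1 : ZMod p) ^ (r + i)) *
          bin p ((p : ℤ) * i - r - 1) ((r : ℤ) - ((p : ℤ) - 1) * s - i)) •
          (gen p false (r + s - i) * gen p true i))}

/-- The Adem elements `𝒜^{(1,r,1,s)}`, `r ≥ ps`. -/
def ademSetO3 (p : ℕ) : Set (FreeO p) :=
  {x | ∃ (r s : ℕ), p * s ≤ r ∧
    x = gen p true r * gen p true s +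
      ∑ i ∈ Finset.range (r + s + 1),
        (((-1 : ZMod p) ^ (r + i)) *
          bin p ((p : ℤ) * i - r - 1) ((r : ℤ) - ((p : ℤ) - 1) * s - i)) •
          (gen p true (r + s - i) * gen p true i)}

/-- The unstable relations `β^εQ^s·x` for `2s - ε < deg x`, together with `βQ^0`. -/
def unstableSetO (p : ℕ) : Set (FreeO p) :=
  {x | ∃ (ε : Bool) (s : ℕ) (n : ℤ) (w : FreeO p), w ∈ HcompO p n ∧
      2 * (s : ℤ) - (if ε then 1 else 0) < n ∧ x = gen p ε s * w} ∪
    {gen p true 0}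

def dlRelO (p : ℕ) : FreeO p → FreeO p → Prop := fun x y =>
  (x ∈ ademSetO1 p ∪ ademSetO2 p ∪ ademSetO3 p ∪ unstableSetO p) ∧ y = 0

/-- The mod `p` Dyer–Lashof algebra. -/
abbrev DLO (p : ℕ) := RingQuot (dlRelO p)

def dlMkO (p : ℕ) : FreeO p →ₐ[ZMod p] DLO p := RingQuot.mkAlgHom (ZMod p) (dlRelO p)

/-- Admissibility: `s_i ≤ p·s_{i-1} - ε_{i-1}`. -/
def AdmissibleO (p : ℕ) (L : List DLGen) : Prop :=
  List.Chain' (fun a b => (b.2 : ℤ) ≤ (p : ℤ) * a.2 - (if a.1 then 1 else 0)) L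

theorem Ideal.isTwoSided_span_of_adjoin_eq_top {R A : Type*} [CommSemiring R] [Semiring A]
    [Algebra R A] {S T : Set A} (hT : Algebra.adjoin R T = ⊤)
    (hST : ∀ x ∈ S, ∀ t ∈ T, x * t ∈ Ideal.span S) : (Ideal.span S).IsTwoSided := by
  have mul_mem_of_mem : ∀ t ∈ T, ∀ x ∈ Ideal.span S, x * t ∈ Ideal.span S := fun t ht x hx => by
    induction hx using Submodule.span_induction with
    | mem y hy => exact hST y hy t ht
    | zero => simp
    | add y z _ _ hy hz => rw [add_mul]; exact add_mem hy hz
    | smul a y _ hy => rw [smul_mul_assoc]; exact Ideal.mul_mem_left _ a hy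
  refine ⟨fun {x} r hx => ?_⟩
  have hr : r ∈ Algebra.adjoin R T := hT ▸ Algebra.mem_top
  induction hr using Algebra.adjoin_induction generalizing x with
  | mem t ht => exact mul_mem_of_mem t ht x hx
  | algebraMap c => rw [← Algebra.commutes]; exact Ideal.mul_mem_left _ _ hx
  | add a b _ _ ha hb => rw [mul_add]; exact add_mem (ha hx) (hb hx)
  | mul a b _ _ ha hb => rw [← mul_assoc]; exact hb (ha hx)

namespace DyerLashof

variable {p : ℕ}

theorem adjoin_range_dlMkO_gen :
    Algebra.adjoin (ZMod p) (Set.range fun g : DLGen => dlMkO p (gen p g.1 g.2)) = ⊤ := by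
  rw [show (Set.range fun g : DLGen => dlMkO p (gen p g.1 g.2)) =
      dlMkO p '' Set.range (FreeAlgebra.ι (ZMod p)) by rw [← Set.range_comp]; rfl,
    Algebra.adjoin_image, FreeAlgebra.adjoin_range_ι, Algebra.map_top, AlgHom.range_eq_top]
  exact RingQuot.mkAlgHom_surjective _ _

theorem dlMkO_eq_zero_of_mem {x : FreeO p}
    (hx : x ∈ ademSetO1 p ∪ ademSetO2 p ∪ ademSetO3 p ∪ unstableSetO p) : dlMkO p x = 0 := by
  have h : dlMkO p x = dlMkO p 0 := RingQuot.mkAlgHom_rel (ZMod p) ⟨hx, rfl⟩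
  rwa [map_zero] at h

theorem dlMkO_betaQ_zero : dlMkO p (gen p true 0) = 0 :=
  dlMkO_eq_zero_of_mem (Or.inr (Or.inr rfl))

theorem dlMkO_gen_mul_gen_of_excess_lt_gdeg {ε ε' : Bool} {s t : ℕ}
    (h : 2 * (s : ℤ) - (if ε then 1 else 0) < gdeg p (ε', t)) :
    dlMkO p (gen p ε s * gen p ε' t) = 0 :=
  dlMkO_eq_zero_of_mem <| Or.inr <| Or.inl
    ⟨ε, s, _, gen p ε' t, Submodule.subset_span ⟨[(ε', t)], by simp, by simp⟩, h, rfl⟩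

theorem dlMkO_adem_first (ε : Bool) {r s : ℕ} (h : p * s < r) :
    dlMkO p (gen p ε r * gen p false s) =
      ∑ i ∈ Finset.range (r + s + 1),
        (((-1 : ZMod p) ^ (r + i)) *
          bin p ((p : ℤ) * i - r) ((r : ℤ) - ((p : ℤ) - 1) * s - i - 1)) •
          dlMkO p (gen p ε (r + s - i) * gen p false i) := by
  have h0 := dlMkO_eq_zero_of_mem (Or.inl (Or.inl (Or.inl ⟨ε, r, s, h, rfl⟩)))
  simpa only [map_sub, map_sum, map_smul, sub_eq_zero] using h0

theorem dlMkO_adem_second {r s : ℕ} (h : p * s ≤ r) :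
    dlMkO p (gen p false r * gen p true s) =
      (∑ i ∈ Finset.range (r + s + 1),
        (((-1 : ZMod p) ^ (r + i)) *
          bin p ((p : ℤ) * i - r) ((r : ℤ) - ((p : ℤ) - 1) * s - i)) •
          dlMkO p (gen p true (r + s - i) * gen p false i)) -
      (∑ i ∈ Finset.range (r + s + 1),
        (((-1 : ZMod p) ^ (r + i)) *
          bin p ((p : ℤ) * i - r - 1) ((r : ℤ) - ((p : ℤ) - 1) * s - i)) •
          dlMkO p (gen p false (r + s - i) * gen p true i)) := by
  have h0 := dlMkO_eq_zero_of_mem (Or.inl (Or.inl (Or.inr ⟨r, s, h, rfl⟩)))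
  simpa only [map_sub, map_sum, map_smul, sub_eq_zero] using h0

theorem bin_zero_left {b : ℤ} (hb : 0 ≤ b) : bin p 0 b = 1 := by
  simp [bin, hb]

theorem bin_of_neg_left {a b : ℤ} (ha : a < 0) : bin p a b = 0 :=
  if_neg fun h => ha.not_ge h.1

def betaIdeal (p : ℕ) : Ideal (DLO p) :=
  Ideal.span {x : DLO p | ∃ s : ℕ, 1 ≤ s ∧ x = dlMkO p (gen p true s)}

theorem mul_betaQ_mem_betaIdeal (y : DLO p) (s : ℕ) :
    y * dlMkO p (gen p true s) ∈ betaIdeal p := by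
  rcases Nat.eq_zero_or_pos s with rfl | hs
  · simp [dlMkO_betaQ_zero]
  · exact Ideal.mul_mem_left _ y (Ideal.subset_span ⟨s, hs, rfl⟩)

theorem adem_sum_sub_mem_betaIdeal {s t : ℕ}
    (ih : ∀ s' < s, ∀ t', dlMkO p (gen p true s' * gen p false t') ∈ betaIdeal p)
    (c : ℕ → ZMod p) (hc : ∀ i < t, c i = 0) :
    (∑ i ∈ Finset.range (s + t + 1), c i • dlMkO p (gen p true (s + t - i) * gen p false i)) -
      c t • dlMkO p (gen p true s * gen p false t) ∈ betaIdeal p := by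
  have ht : t ∈ Finset.range (s + t + 1) := Finset.mem_range.2 (by omega)
  rw [← Finset.add_sum_erase _ _ ht, Nat.add_sub_cancel, add_sub_cancel_left]
  refine Ideal.sum_mem _ fun i hi => ?_
  obtain ⟨hit, hi⟩ := Finset.mem_erase.1 hi
  rcases hit.lt_or_gt with hlt | hgt
  · simp [hc i hlt]
  · exact Submodule.smul_of_tower_mem _ _ (ih _ (by simp at hi; omega) i)

theorem betaQ_mul_Q_eq_zero_of_add_lt {s t : ℕ} (h : s + t < p * t) :
    dlMkO p (gen p true s * gen p false t) = 0 := by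
  refine dlMkO_gen_mul_gen_of_excess_lt_gdeg ?_
  have h' : (s : ℤ) + t < p * t := by exact_mod_cast h
  simp only [gdeg]
  push_cast
  linarith

theorem betaQ_mul_Q_mem_of_mul_lt {s t : ℕ}
    (ih : ∀ s' < s, ∀ t', dlMkO p (gen p true s' * gen p false t') ∈ betaIdeal p)
    (h : p * t < s) : dlMkO p (gen p true s * gen p false t) ∈ betaIdeal p := by
  set c : ℕ → ZMod p := fun i =>
    (-1) ^ (s + i) * bin p ((p : ℤ) * i - s) ((s : ℤ) - ((p : ℤ) - 1) * t - i - 1)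
  have hc : ∀ i ≤ t, c i = 0 := fun i hi => by
    have : ((p * i : ℕ) : ℤ) < s := by exact_mod_cast (Nat.mul_le_mul_left p hi).trans_lt h
    push_cast at this
    simp only [c, bin_of_neg_left (by linarith : (p : ℤ) * i - s < 0), mul_zero]
  have hsum := adem_sum_sub_mem_betaIdeal ih c fun i hi => hc i hi.le
  rwa [hc t le_rfl, zero_smul, sub_zero, ← dlMkO_adem_first true h] at hsum

theorem betaQ_mul_Q_mem_of_le_mul (hp : Odd p) {s t : ℕ}
    (ih : ∀ s' < s, ∀ t', dlMkO p (gen p true s' * gen p false t') ∈ betaIdeal p)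
    (h₁ : p * t ≤ s + t) (h₂ : s ≤ p * t) :
    dlMkO p (gen p true s * gen p false t) ∈ betaIdeal p := by
  set u := s + t - p * t
  have hu : p * t + u = s + t := by omega
  have hut : u ≤ t := by omega
  have hrel := dlMkO_adem_second (Nat.mul_le_mul_left p hut)
  rw [hu] at hrel
  set c : ℕ → ZMod p := fun i => (-1) ^ (p * t + i) *
    bin p ((p : ℤ) * i - ((p * t : ℕ) : ℤ)) (((p * t : ℕ) : ℤ) - ((p : ℤ) - 1) * u - i)
  have hc : ∀ i < t, c i = 0 := fun i hi => by
    have : (i : ℤ) < t := by exact_mod_cast hi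
    have : (1 : ℤ) ≤ p := by exact_mod_cast hp.pos
    simp only [c, bin_of_neg_left (by push_cast; nlinarith : (p : ℤ) * i - ((p * t : ℕ) : ℤ) < 0),
      mul_zero]
  have hct : c t = 1 := by
    have heven : Even (p * t + t) := by
      rw [show p * t + t = (p + 1) * t by ring]; exact hp.add_one.mul_right t
    have hzero : (p : ℤ) * t - ((p * t : ℕ) : ℤ) = 0 := by push_cast; ring
    have hnonneg : (0 : ℤ) ≤ ((p * t : ℕ) : ℤ) - ((p : ℤ) - 1) * u - t := by
      have : (u : ℤ) ≤ t := by exact_mod_cast hut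
      have : (1 : ℤ) ≤ p := by exact_mod_cast hp.pos
      push_cast; nlinarith
    simp only [c, heven.neg_one_pow, one_mul, hzero, bin_zero_left hnonneg]
  have hsum : (∑ i ∈ Finset.range (s + t + 1),
      c i • dlMkO p (gen p true (s + t - i) * gen p false i)) ∈ betaIdeal p := by
    rw [← eq_sub_iff_add_eq.mp hrel, map_mul]
    refine add_mem (mul_betaQ_mem_betaIdeal _ _) (Ideal.sum_mem _ fun i _ => ?_)
    rw [map_mul]
    exact Submodule.smul_of_tower_mem _ _ (mul_betaQ_mem_betaIdeal _ _)
  have := sub_mem hsum (adem_sum_sub_mem_betaIdeal ih c hc)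
  rwa [hct, one_smul, sub_sub_cancel] at this

theorem betaQ_mul_Q_mem_betaIdeal (hp : Odd p) (s t : ℕ) :
    dlMkO p (gen p true s * gen p false t) ∈ betaIdeal p := by
  induction s using Nat.strong_induction_on generalizing t with
  | _ s ih =>
    rcases lt_or_ge (s + t) (p * t) with h | h
    · rw [betaQ_mul_Q_eq_zero_of_add_lt h]; exact zero_mem _
    rcases le_or_gt s (p * t) with h' | h'
    · exact betaQ_mul_Q_mem_of_le_mul hp ih h h'
    · exact betaQ_mul_Q_mem_of_mul_lt ih h'

theorem betaIdeal_isTwoSided (hp : Odd p) : (betaIdeal p).IsTwoSided := by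
  refine Ideal.isTwoSided_span_of_adjoin_eq_top adjoin_range_dlMkO_gen ?_
  rintro _ ⟨s, -, rfl⟩ _ ⟨⟨ε, t⟩, rfl⟩
  cases ε
  · rw [← map_mul]; exact betaQ_mul_Q_mem_betaIdeal hp s t
  · exact mul_betaQ_mem_betaIdeal _ t

theorem dlMkO_prod_mem_betaIdeal (hp : Odd p) {L : List DLGen} (hL : ∃ g ∈ L, g.1 = true) :
    dlMkO p ((L.map fun g => gen p g.1 g.2).prod) ∈ betaIdeal p := by
  obtain ⟨⟨ε, s⟩, hg, rfl : ε = true⟩ := hL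
  obtain ⟨L₁, L₂, rfl⟩ := List.append_of_mem hg
  have := betaIdeal_isTwoSided hp
  simp only [List.map_append, List.map_cons, List.prod_append, List.prod_cons, map_mul,
    ← mul_assoc]
  exact Ideal.mul_mem_right _ _ (mul_betaQ_mem_betaIdeal _ s)

end DyerLashof

theorem dyerLashof_odd_bockstein_left_ideal_is_right_ideal
    (hp : Odd p)
    (I : Ideal (DLO p))
    (hI : I = Ideal.span {x : DLO p | ∃ s : ℕ, 1 ≤ s ∧ x = dlMkO p (gen p true s)}) :
    -- the left ideal `I` is a two-sided ideal
    (∀ x ∈ I, ∀ r : DLO p, x * r ∈ I) ∧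
    -- consequently, every admissible monomial containing a Bockstein lies in `I`
    (∀ L : List DLGen, AdmissibleO p L → (∃ g ∈ L, g.1 = true) →
      dlMkO p ((L.map fun g => gen p g.1 g.2).prod) ∈ I) := by
  subst hI
  exact ⟨fun _ hx r => (DyerLashof.betaIdeal_isTwoSided hp).mul_mem_of_left r hx,
    fun _ _ hL => DyerLashof.dlMkO_prod_mem_betaIdeal hp hL⟩

end
end

section
/- Let R be the mod 2 Dyer–Lashof algebra. The left ideal in R generated by the odd-indexed operations {Q^{2s+1} : s ≥ 0} is also a right ideal. -/
/-!
STATEMENT 9: In the mod 2 Dyer–Lashof algebra `R`, the left ideal generated by the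
odd-indexed operations `{Q^{2s+1} : s ≥ 0}` is also a right ideal.

`R` is the quotient of the free associative `F_2`-algebra on symbols `Q^s` (`s ≥ 0`,
`deg Q^s = s`) by the Adem relations
`Q^rQ^s = Σ_i (i-s-1 choose 2i-r)·Q^{r+s-i}Q^i` for `r > 2s`, together with the unstable
relations `Q^s·x = 0` for `x` homogeneous of degree `> s`.
-/

noncomputable section

abbrev F2 := ZMod 2

/-- The free associative algebra on the symbols `Q^s`, `s ≥ 0`. -/
abbrev FreeDL := FreeAlgebra F2 ℕ

/-- The generator `Q^s`. -/
def q (s : ℕ) : FreeDL := FreeAlgebra.ι F2 s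

/-- The span of the monomials `Q^{s_1}⋯Q^{s_k}` of total degree `n`: the homogeneous
component of degree `n` of the free algebra. -/
def Hcomp (n : ℕ) : Submodule F2 FreeDL :=
  Submodule.span F2 {w | ∃ L : List ℕ, L.sum = n ∧ w = (L.map q).prod}

/-- The mod 2 Adem coefficient `(2i - r, r - s - i - 1) = (i-s-1 choose 2i-r)`
(`(a,b) := (a+b)!/(a!b!)`, zero when `a < 0` or `b < 0`). -/
def ademCoeff (r s i : ℕ) : F2 :=
  if r ≤ 2 * i ∧ s + i + 1 ≤ r then ((i - s - 1).choose (2 * i - r) : F2) else 0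

/-- The Adem elements `Q^rQ^s - Σ_i (i-s-1 choose 2i-r)·Q^{r+s-i}Q^i`, `r > 2s`
(signs are irrelevant mod 2). -/
def ademSet : Set FreeDL :=
  {x | ∃ r s : ℕ, 2 * s < r ∧
    x = q r * q s + ∑ i ∈ Finset.range (r + s + 1), ademCoeff r s i • (q (r + s - i) * q i)}

/-- The unstable relations: `Q^s·x` for `x` homogeneous of degree `> s`. -/
def unstableSet : Set FreeDL :=
  {x | ∃ (s n : ℕ) (w : FreeDL), s < n ∧ w ∈ Hcomp n ∧ x = q s * w}

/-- The relations defining the mod 2 Dyer–Lashof algebra. -/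
def dlRel : FreeDL → FreeDL → Prop := fun x y => (x ∈ ademSet ∪ unstableSet) ∧ y = 0

/-- The mod 2 Dyer–Lashof algebra. -/
abbrev DL2 := RingQuot dlRel

/-- The quotient map from the free algebra to the Dyer–Lashof algebra. -/
def dlMk : FreeDL →ₐ[F2] DL2 := RingQuot.mkAlgHom F2 dlRel

/- ===== auxiliary lemmas ===== -/

def oddIdeal : Ideal DL2 := Ideal.span {x : DL2 | ∃ s : ℕ, x = dlMk (q (2 * s + 1))}

lemma dlMk_eq_zero {x : FreeDL} (h : x ∈ ademSet ∪ unstableSet) : dlMk x = 0 := by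
  have h1 : RingQuot.mkAlgHom F2 dlRel x = RingQuot.mkAlgHom F2 dlRel 0 :=
    RingQuot.mkAlgHom_rel F2 ⟨h, rfl⟩
  rw [map_zero] at h1
  simpa [dlMk] using h1

lemma dl_add_self (z : DL2) : z + z = 0 := by
  have h : (2 : F2) • z = z + z := two_smul F2 z
  have h2 : (2 : F2) = 0 := by decide
  rw [h2, zero_smul] at h
  exact h.symm

lemma dl_eq_of_add_eq_zero {a b : DL2} (h : a + b = 0) : a = b := by
  have h2 := congrArg (· + b) h
  simp only [add_assoc, dl_add_self, add_zero, zero_add] at h2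
  exact h2

lemma adem_eq (a b : ℕ) (h : 2 * b < a) :
    dlMk (q a * q b) =
      ∑ i ∈ Finset.range (a + b + 1), ademCoeff a b i • dlMk (q (a + b - i) * q i) := by
  have h0 : dlMk (q a * q b +
      ∑ i ∈ Finset.range (a + b + 1), ademCoeff a b i • (q (a + b - i) * q i)) = 0 :=
    dlMk_eq_zero (Or.inl ⟨a, b, h, rfl⟩)
  rw [map_add, map_sum] at h0
  simp only [map_smul] at h0
  exact dl_eq_of_add_eq_zero h0

lemma unstable_eq_zero (s : ℕ) (L : List ℕ) (h : s < L.sum) :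
    dlMk (q s * (List.map q L).prod) = 0 := by
  refine dlMk_eq_zero (Or.inr ⟨s, L.sum, (List.map q L).prod, h, ?_, rfl⟩)
  rw [Hcomp]
  exact Submodule.subset_span ⟨L, rfl, rfl⟩

lemma mon_cons (A : ℕ) (L : List ℕ) :
    dlMk ((List.map q (A :: L)).prod) = dlMk (q A) * dlMk ((List.map q L).prod) := by
  rw [List.map_cons, List.prod_cons, map_mul]

lemma pair_mul (A i : ℕ) (L : List ℕ) :
    dlMk (q A * q i) * dlMk ((List.map q L).prod) =
      dlMk (q A) * dlMk ((List.map q (i :: L)).prod) := by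
  rw [mon_cons, map_mul, mul_assoc]

lemma odd_gen_mem {r : ℕ} (hr : Odd r) : dlMk (q r) ∈ oddIdeal := by
  obtain ⟨k, hk⟩ := hr
  exact Ideal.subset_span ⟨k, by rw [show r = 2 * k + 1 from by omega]⟩

lemma smul_mem_oddIdeal (c : F2) {x : DL2} (h : x ∈ oddIdeal) : c • x ∈ oddIdeal := by
  rw [Algebra.smul_def]
  exact Ideal.mul_mem_left _ _ h

lemma ademCoeff_cond {a b i : ℕ} (hc : ademCoeff a b i ≠ 0) :
    a ≤ 2 * i ∧ b + i + 1 ≤ a := by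
  by_contra hcon
  exact hc (by rw [ademCoeff, if_neg hcon])

lemma key (r : ℕ) :
    Odd r → ∀ L : List ℕ, dlMk (q r) * dlMk ((List.map q L).prod) ∈ oddIdeal := by
  induction r using Nat.strong_induction_on with
  | _ r IH =>
  intro hr L
  have hr2 : r % 2 = 1 := Nat.odd_iff.mp hr
  cases L with
  | nil =>
      simp only [List.map_nil, List.prod_nil, map_one, mul_one]
      exact odd_gen_mem hr
  | cons s L' =>
      by_cases hdeg : r < s + L'.sum
      · have h0 : dlMk (q r * (List.map q (s :: L')).prod) = 0 :=
          unstable_eq_zero r (s :: L') (by simp only [List.sum_cons]; omega)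
        rw [← map_mul, h0]
        exact Ideal.zero_mem _
      · push_neg at hdeg
        rw [mon_cons, ← mul_assoc, ← map_mul]
        rcases Nat.even_or_odd s with hse | hso
        · -- s even
          have hs2 := Nat.even_iff.mp hse
          rcases Nat.lt_or_ge (2 * s) r with hcase | hcase
          · -- Adem case r > 2s
            rw [adem_eq r s hcase, Finset.sum_mul]
            refine Submodule.sum_mem _ fun i hi => ?_
            by_cases hc : ademCoeff r s i = 0
            · rw [hc, zero_smul, zero_mul]; exact Ideal.zero_mem _
            · obtain ⟨hc1, hc2⟩ := ademCoeff_cond hc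
              rw [smul_mul_assoc]
              refine smul_mem_oddIdeal _ ?_
              rw [pair_mul]
              rcases Nat.even_or_odd i with hie | hio
              · have hi2 := Nat.even_iff.mp hie
                have hodd : Odd (r + s - i) := by rw [Nat.odd_iff]; omega
                exact IH _ (by omega) hodd (i :: L')
              · rw [mon_cons]
                exact Ideal.mul_mem_left _ _ (IH i (by omega) hio L')
          · -- r < 2s, s even, so s < r
            have hsr : s < r := by omega
            have hrel := adem_eq (2 * s) (r - s) (by omega)
            rw [show 2 * s + (r - s) = r + s from by omega] at hrel
            have hsmem : s ∈ Finset.range (r + s + 1) := by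
              rw [Finset.mem_range]; omega
            rw [← Finset.add_sum_erase _
              (fun i => ademCoeff (2 * s) (r - s) i • dlMk (q (r + s - i) * q i)) hsmem] at hrel
            have hcoef : ademCoeff (2 * s) (r - s) s = 1 := by
              rw [ademCoeff, if_pos ⟨le_refl _, by omega⟩]
              simp
            rw [hcoef, one_smul, show r + s - s = r from by omega] at hrel
            have hT : dlMk (q r * q s) = dlMk (q (2 * s) * q (r - s)) +
                ∑ i ∈ (Finset.range (r + s + 1)).erase s,
                  ademCoeff (2 * s) (r - s) i • dlMk (q (r + s - i) * q i) := by
              rw [hrel, add_assoc, dl_add_self, add_zero]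
            rw [hT, add_mul]
            refine Ideal.add_mem _ ?_ ?_
            · rw [pair_mul, mon_cons]
              have hodd : Odd (r - s) := by rw [Nat.odd_iff]; omega
              exact Ideal.mul_mem_left _ _ (IH (r - s) (by omega) hodd L')
            · rw [Finset.sum_mul]
              refine Submodule.sum_mem _ fun i hi => ?_
              obtain ⟨hne, hmem⟩ := Finset.mem_erase.mp hi
              by_cases hc : ademCoeff (2 * s) (r - s) i = 0
              · rw [hc, zero_smul, zero_mul]; exact Ideal.zero_mem _
              · obtain ⟨hc1, hc2⟩ := ademCoeff_cond hc
                rw [smul_mul_assoc]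
                refine smul_mem_oddIdeal _ ?_
                rw [pair_mul]
                rcases Nat.even_or_odd i with hie | hio
                · have hi2 := Nat.even_iff.mp hie
                  have hodd : Odd (r + s - i) := by rw [Nat.odd_iff]; omega
                  have hne' : i ≠ s := hne
                  exact IH _ (by omega) hodd (i :: L')
                · rcases Nat.lt_or_ge i r with hir | hir
                  · rw [mon_cons]
                    exact Ideal.mul_mem_left _ _ (IH i hir hio L')
                  · have hz : dlMk (q (r + s - i) * (List.map q (i :: L')).prod) = 0 :=
                      unstable_eq_zero _ _ (by simp only [List.sum_cons]; omega)
                    rw [← map_mul, hz]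
                    exact Ideal.zero_mem _
        · -- s odd
          rcases Nat.lt_or_ge s r with hsr | hsr
          · rw [pair_mul, mon_cons]
            exact Ideal.mul_mem_left _ _ (IH s hsr hso L')
          · -- s ≥ r : forces s = r, L'.sum = 0
            have hs : s = r := by omega
            have hd : L'.sum = 0 := by omega
            subst hs
            cases L' with
            | nil =>
                simp only [List.map_nil, List.prod_nil, map_one, mul_one, map_mul]
                exact Ideal.mul_mem_left _ _ (odd_gen_mem hr)
            | cons t L'' =>
                have ht : t = 0 := by
                  simp only [List.sum_cons] at hd; omega
                subst ht
                rw [mon_cons]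
                have hre : dlMk (q s * q s) * (dlMk (q 0) * dlMk ((List.map q L'').prod)) =
                    dlMk (q s) * (dlMk (q s * q 0) * dlMk ((List.map q L'').prod)) := by
                  simp only [map_mul, mul_assoc]
                rw [hre, adem_eq s 0 (by omega), Finset.sum_mul, Finset.mul_sum]
                refine Submodule.sum_mem _ fun i hi => ?_
                by_cases hc : ademCoeff s 0 i = 0
                · rw [hc, zero_smul, zero_mul, mul_zero]; exact Ideal.zero_mem _
                · obtain ⟨hc1, hc2⟩ := ademCoeff_cond hc
                  rw [smul_mul_assoc, mul_smul_comm]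
                  refine smul_mem_oddIdeal _ ?_
                  rw [pair_mul]
                  rcases Nat.even_or_odd i with hie | hio
                  · have hi2 := Nat.even_iff.mp hie
                    have hodd : Odd (s + 0 - i) := by rw [Nat.odd_iff]; omega
                    exact Ideal.mul_mem_left _ _ (IH _ (by omega) hodd (i :: L''))
                  · rw [mon_cons]
                    exact Ideal.mul_mem_left _ _
                      (Ideal.mul_mem_left _ _ (IH i (by omega) hio L''))

lemma monSpan_mul {a b : DL2}
    (ha : a ∈ Submodule.span F2 {z : DL2 | ∃ L : List ℕ, z = dlMk ((List.map q L).prod)})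
    (hb : b ∈ Submodule.span F2 {z : DL2 | ∃ L : List ℕ, z = dlMk ((List.map q L).prod)}) :
    a * b ∈ Submodule.span F2 {z : DL2 | ∃ L : List ℕ, z = dlMk ((List.map q L).prod)} := by
  induction ha using Submodule.span_induction with
  | mem x hx =>
      induction hb using Submodule.span_induction with
      | mem y hy =>
          obtain ⟨L1, rfl⟩ := hx
          obtain ⟨L2, rfl⟩ := hy
          refine Submodule.subset_span ⟨L1 ++ L2, ?_⟩
          rw [← map_mul, List.map_append, List.prod_append]
      | zero => rw [mul_zero]; exact Submodule.zero_mem _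
      | add y z _ _ hpy hpz => rw [mul_add]; exact Submodule.add_mem _ hpy hpz
      | smul c y _ hpy => rw [mul_smul_comm]; exact Submodule.smul_mem _ _ hpy
  | zero => rw [zero_mul]; exact Submodule.zero_mem _
  | add x y _ _ hpx hpy => rw [add_mul]; exact Submodule.add_mem _ hpx hpy
  | smul c x _ hpx => rw [smul_mul_assoc]; exact Submodule.smul_mem _ _ hpx

lemma monSpan_top (y : DL2) :
    y ∈ Submodule.span F2 {z : DL2 | ∃ L : List ℕ, z = dlMk ((List.map q L).prod)} := by
  obtain ⟨x, rfl⟩ := RingQuot.mkAlgHom_surjective F2 dlRel y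
  show dlMk x ∈ _
  induction x using FreeAlgebra.induction with
  | grade0 c =>
      rw [AlgHom.commutes, Algebra.algebraMap_eq_smul_one]
      exact Submodule.smul_mem _ _ (Submodule.subset_span ⟨[], by simp⟩)
  | grade1 i =>
      exact Submodule.subset_span ⟨[i], by simp [q]⟩
  | mul u v hu hv => rw [map_mul]; exact monSpan_mul hu hv
  | add u v hu hv => rw [map_add]; exact Submodule.add_mem _ hu hv

lemma main_mem {r : ℕ} (hr : Odd r) (y : DL2) : dlMk (q r) * y ∈ oddIdeal := by
  have hy := monSpan_top y
  induction hy using Submodule.span_induction with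
  | mem z hz => obtain ⟨L, rfl⟩ := hz; exact key r hr L
  | zero => rw [mul_zero]; exact Ideal.zero_mem _
  | add u v _ _ hpu hpv => rw [mul_add]; exact Ideal.add_mem _ hpu hpv
  | smul c u _ hpu => rw [mul_smul_comm]; exact smul_mem_oddIdeal _ hpu

theorem dyerLashof_mod_two_odd_left_ideal_is_right_ideal :
    ∀ x ∈ (Ideal.span {x : DL2 | ∃ s : ℕ, x = dlMk (q (2 * s + 1))}),
      ∀ r : DL2, x * r ∈ Ideal.span {x : DL2 | ∃ s : ℕ, x = dlMk (q (2 * s + 1))} := by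
  intro x hx r
  induction hx using Submodule.span_induction with
  | mem z hz => obtain ⟨s, rfl⟩ := hz; exact main_mem ⟨s, by omega⟩ r
  | zero => rw [zero_mul]; exact Ideal.zero_mem _
  | add u v _ _ hpu hpv => rw [add_mul]; exact Ideal.add_mem _ hpu hpv
  | smul c u _ hpu => rw [smul_mul_assoc]; exact Submodule.smul_mem _ _ hpu

end
end

section
/- Let p = 2 and let ι ∈ H_0(QS^0; F_2) be the class of the non-basepoint. In QH_*(Q_0 S^0; F_2), the image of the map induced on indecomposables by the S^1-transfer ∂: Σ CP^∞_+ → QS^0 contains every class Q^{2s+1}ι for s ≥ 0. Explicitly, using the Adem relation Q^{2s}Q^1 = Q^{s+1}Q^s, one has Q(∂_*)(a_{2s+1} - Q^{2s}a_1) = Q^{2s+1}ι, where Q(∂_*)(a_s) = Q^{2s+1}ι + Q^{s+1}Q^sι. -/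
/-!
STATEMENT 10: (p = 2) The image of the map induced on indecomposables by the
`S¹`-transfer `∂ : ΣCP^∞_+ → QS⁰` contains every class `Q^{2s+1}ι`; explicitly, with
`Q(∂_*)(a_{2s+1}) = Q^{2s+1}ι + Q^{s+1}Q^sι` and the Adem relation
`Q^{2s}Q^1 = Q^{s+1}Q^s`, one has `Q(∂_*)(a_{2s+1} - Q^{2s}a_1) = Q^{2s+1}ι`.

`QH_*(QS⁰)` is the free `Q`-unstable module `D'F₂` on a degree-zero generator `ι` over
the mod 2 Dyer–Lashof algebra `R`, and `QH_*(QΣCP^∞_+)` is the free `Q`-unstable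
`R`-module on generators `a_{2s+1}` of degree `2s+1`, `s ≥ 0`.
-/

open scoped DirectSum

noncomputable section

instance : Ring DL2 := RingQuot.instRing dlRel
/-- The free `Q`-unstable `R`-module `D'(F₂·a)` on one generator `a` of degree `d`:
the quotient of `R` by the (left) span of the elements `Q^t·(w·a)` with `w` homogeneous
of degree `m` and `2t ≤ 2(m + d)`, i.e. `t ≤ m + deg a`. -/
abbrev Dmod (d : ℕ) : Type :=
  DL2 ⧸ Submodule.span DL2
    {y : DL2 | ∃ (t m : ℕ) (w : FreeDL), w ∈ Hcomp m ∧ t ≤ m + d ∧ y = dlMk (q t * w)}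

/-- `QH_*(QS⁰; F₂) = D'F₂`, on the degree-zero generator `ι`. -/
abbrev NQS : Type := Dmod 0

def mkN : DL2 → NQS := Submodule.Quotient.mk

/-- `QH_*(QΣCP^∞_+; F₂)`: free `Q`-unstable `R`-module on generators `a_{2s+1}`. -/
abbrev MCP : Type := ⨁ s : ℕ, Dmod (2 * s + 1)

/-- The generator `a_{2s+1}`. -/
def aGen (s : ℕ) : MCP :=
  DirectSum.of (fun s => Dmod (2 * s + 1)) s (Submodule.Quotient.mk 1)

/-!
In `R` the Adem relation for `Q^{2s}Q^1` collapses, by unstability of the terms `Q^{2s+1-i}Q^i`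
with `i > s`, to `Q^{2s}Q^1 = Q^{s+1}Q^s`; likewise `Q^1Q^0 = 0`, so `Q(∂_*)(a_1) = Q^1ι`.
Applying `Q^{2s}` to this and subtracting it from `Q(∂_*)(a_{2s+1})` cancels the decomposable
term `Q^{s+1}Q^sι`.
-/

lemma q_mem_Hcomp (n : ℕ) : q n ∈ Hcomp n :=
  Submodule.subset_span ⟨[n], by simp, by simp⟩

lemma dlMk_eq_zero_of_dlRel {x : FreeDL} (hx : dlRel x 0) : dlMk x = 0 := by
  rw [← map_zero dlMk]
  exact RingQuot.mkAlgHom_rel F2 hx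

lemma dlMk_q_mul_eq_zero_of_lt {s n : ℕ} {w : FreeDL} (h : s < n) (hw : w ∈ Hcomp n) :
    dlMk (q s * w) = 0 :=
  dlMk_eq_zero_of_dlRel ⟨Or.inr ⟨s, n, w, h, hw, rfl⟩, rfl⟩

lemma DL2.add_self_eq_zero (y : DL2) : y + y = 0 := by
  rw [← two_smul F2 y, show (2 : F2) = 0 by decide, zero_smul]

lemma dlMk_q_mul_q_eq_adem_sum {r s : ℕ} (h : 2 * s < r) :
    dlMk (q r * q s) =
      ∑ i ∈ Finset.range (r + s + 1), ademCoeff r s i • dlMk (q (r + s - i) * q i) := by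
  have hrel : dlMk (q r * q s +
      ∑ i ∈ Finset.range (r + s + 1), ademCoeff r s i • (q (r + s - i) * q i)) = 0 :=
    dlMk_eq_zero_of_dlRel ⟨Or.inl ⟨r, s, h, rfl⟩, rfl⟩
  simp only [map_add, map_sum, map_smul] at hrel
  rwa [← DL2.add_self_eq_zero (dlMk (q r * q s)), add_right_inj, eq_comm] at hrel

lemma dlMk_q_one_mul_q_zero : dlMk (q 1 * q 0) = 0 := by
  rw [dlMk_q_mul_q_eq_adem_sum (by norm_num)]
  refine Finset.sum_eq_zero fun i _ => ?_
  rw [ademCoeff, if_neg (by omega), zero_smul]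

lemma dlMk_adem_two_mul_one (s : ℕ) : dlMk (q (2 * s) * q 1) = dlMk (q (s + 1) * q s) := by
  rcases Nat.lt_or_ge s 2 with hs | hs
  · interval_cases s
    · rw [dlMk_q_mul_eq_zero_of_lt (by norm_num) (q_mem_Hcomp 1), dlMk_q_one_mul_q_zero]
    · rfl
  rw [dlMk_q_mul_q_eq_adem_sum (by omega),
    Finset.sum_eq_single_of_mem s (Finset.mem_range.2 (by omega))]
  · rw [ademCoeff, if_pos (by omega), Nat.sub_self, Nat.choose_zero_right, Nat.cast_one, one_smul,
      show 2 * s + 1 - s = s + 1 by omega]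
  · intro i _ hne
    rcases Nat.lt_or_gt_of_ne hne with hlt | hgt
    · rw [ademCoeff, if_neg (by omega), zero_smul]
    · rw [dlMk_q_mul_eq_zero_of_lt (by omega) (q_mem_Hcomp i), smul_zero]

lemma mkN_mul (c y : DL2) : mkN (c * y) = c • mkN y :=
  (Submodule.Quotient.mk_smul _ c y).symm

lemma mkN_sub (a b : DL2) : mkN (a - b) = mkN a - mkN b :=
  Submodule.Quotient.mk_sub _

theorem transfer_image_contains_odd_classes
    (f : MCP →ₗ[DL2] NQS)
    (hf : ∀ s : ℕ, f (aGen s) = mkN (dlMk (q (2 * s + 1) + q (s + 1) * q s))) :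
    -- the Adem relation `Q^{2s}Q^1 = Q^{s+1}Q^s` in `R`
    (∀ s : ℕ, dlMk (q (2 * s) * q 1) = dlMk (q (s + 1) * q s)) ∧
    -- the explicit formula `Q(∂_*)(a_{2s+1} - Q^{2s}a_1) = Q^{2s+1}ι`
    (∀ s : ℕ, f (aGen s - dlMk (q (2 * s)) • aGen 0) = mkN (dlMk (q (2 * s + 1)))) ∧
    -- hence every `Q^{2s+1}ι` lies in the image of `Q(∂_*)`
    (∀ s : ℕ, mkN (dlMk (q (2 * s + 1))) ∈ LinearMap.range f) := by
  have hf_zero : f (aGen 0) = mkN (dlMk (q 1)) := by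
    rw [hf 0, map_add, dlMk_q_one_mul_q_zero, add_zero]
  have h_formula (s : ℕ) :
      f (aGen s - dlMk (q (2 * s)) • aGen 0) = mkN (dlMk (q (2 * s + 1))) := by
    rw [map_sub, map_smul, hf s, hf_zero, ← mkN_mul, ← map_mul, dlMk_adem_two_mul_one, ← mkN_sub,
      map_add, add_sub_cancel_right]
  exact ⟨dlMk_adem_two_mul_one, h_formula, fun s => ⟨_, h_formula s⟩⟩

end
end
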